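/- arXiv:2002.07532 — 8 statements merged into one kernel-verified Lean document; each statement's English description precedes it below -/
import Mathlib

section
/- For real p with 1 < p < ∞, the set D = {(F, f, A, v) ∈ ℝ⁴ : F ≥ 0, f ≥ 0, A > 0, v > 0, v ≥ A, f^p ≤ F * v^(p-1)} is a convex subset of ℝ⁴. -/
/-! For `v > 0` and `f ≥ 0` the constraint `f ^ p ≤ F * v ^ (p - 1)` says `v * (f / v) ^ p ≤ F`,
i.e. `(f, v, F)` lies in the epigraph of the perspective `(f, v) ↦ v * (f / v) ^ p` of the convex
function `t ↦ t ^ p`. Perspectives of convex functions are jointly convex, so this epigraph is convex,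
and the remaining constraints are linear. -/

open Real Set

section Perspective

variable {E : Type*} [AddCommGroup E] [Module ℝ E]

lemma inv_smul_add_eq_weighted_inv_smul_add {a b t₁ t₂ : ℝ} (ha : 0 < a) (hb : 0 < b)
    (ht₁ : 0 < t₁) (ht₂ : 0 < t₂) (u₁ u₂ : E) :
    (a * t₁ + b * t₂)⁻¹ • (a • u₁ + b • u₂) =
      (a * t₁ / (a * t₁ + b * t₂)) • t₁⁻¹ • u₁ + (b * t₂ / (a * t₁ + b * t₂)) • t₂⁻¹ • u₂ := by
  simp only [smul_add, smul_smul]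
  congr 2 <;> field_simp

theorem ConvexOn.perspective {s : Set E} {g : E → ℝ} (hg : ConvexOn ℝ s g) :
    ConvexOn ℝ {x : E × ℝ | 0 < x.2 ∧ x.2⁻¹ • x.1 ∈ s} fun x => x.2 * g (x.2⁻¹ • x.1) := by
  refine convexOn_iff_forall_pos.2 ⟨convex_iff_forall_pos.2 ?_, ?_⟩
  all_goals
    rintro ⟨u₁, t₁⟩ ⟨ht₁, hu₁⟩ ⟨u₂, t₂⟩ ⟨ht₂, hu₂⟩ a b ha hb hab
    simp only [Prod.smul_mk, Prod.mk_add_mk, smul_eq_mul, mem_ofPred_eq] at *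
    have hT : 0 < a * t₁ + b * t₂ := by positivity
    have hw : a * t₁ / (a * t₁ + b * t₂) + b * t₂ / (a * t₁ + b * t₂) = 1 := by field_simp
    rw [inv_smul_add_eq_weighted_inv_smul_add ha hb ht₁ ht₂]
  · exact ⟨hT, hg.1 hu₁ hu₂ (by positivity) (by positivity) hw⟩
  · refine (mul_le_mul_of_nonneg_left
      (hg.2 hu₁ hu₂ (by positivity) (by positivity) hw) hT.le).trans_eq ?_
    simp only [smul_eq_mul]
    field_simp

end Perspective

lemma rpow_le_mul_rpow_sub_one_iff {p F f v : ℝ} (hf : 0 ≤ f) (hv : 0 < v) :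
    f ^ p ≤ F * v ^ (p - 1) ↔ v * (v⁻¹ * f) ^ p ≤ F := by
  have hvp : 0 < v ^ p / v := by positivity
  rw [inv_mul_eq_div, div_rpow hf hv.le, rpow_sub_one hv.ne', ← div_le_iff₀ hvp]
  field_simp

theorem dyadic_hardy_domain_convex (p : ℝ) (hp : 1 < p) :
    Convex ℝ {x : ℝ × ℝ × ℝ × ℝ |
      0 ≤ x.1 ∧ 0 ≤ x.2.1 ∧ 0 < x.2.2.1 ∧ 0 < x.2.2.2 ∧ x.2.2.1 ≤ x.2.2.2 ∧
      x.2.1 ^ p ≤ x.1 * x.2.2.2 ^ (p - 1)} := by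
  refine convex_iff_forall_pos.2 ?_
  rintro ⟨F₁, f₁, A₁, v₁⟩ ⟨hF₁, hf₁, hA₁, hv₁, hAv₁, h₁⟩
    ⟨F₂, f₂, A₂, v₂⟩ ⟨hF₂, hf₂, hA₂, hv₂, hAv₂, h₂⟩ a b ha hb hab
  simp only [Prod.smul_mk, Prod.mk_add_mk, smul_eq_mul, mem_ofPred_eq] at *
  refine ⟨by positivity, by positivity, by positivity, by positivity, by gcongr, ?_⟩
  rw [rpow_le_mul_rpow_sub_one_iff hf₁ hv₁] at h₁
  rw [rpow_le_mul_rpow_sub_one_iff hf₂ hv₂] at h₂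
  rw [rpow_le_mul_rpow_sub_one_iff (by positivity) (by positivity)]
  have hpersp := (convexOn_rpow hp.le).perspective.2 (x := (f₁, v₁)) (y := (f₂, v₂))
    ⟨hv₁, by simp only [smul_eq_mul, mem_Ici]; positivity⟩
    ⟨hv₂, by simp only [smul_eq_mul, mem_Ici]; positivity⟩ ha.le hb.le hab
  simp only [Prod.smul_mk, Prod.mk_add_mk, smul_eq_mul] at hpersp
  calc _ ≤ a * (v₁ * (v₁⁻¹ * f₁) ^ p) + b * (v₂ * (v₂⁻¹ * f₂) ^ p) := hpersp
    _ ≤ a * F₁ + b * F₂ := by gcongr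
end

section
/- For every (F, f, A, v) in D, the Bellman function satisfies 0 ≤ B(F, f, A, v) ≤ (p/(p-1))^p · F. -/
theorem bellman_bounds (p : ℝ) (hp : 1 < p) (F f A v : ℝ)
    (hF : 0 ≤ F) (hf : 0 ≤ f) (hA : 0 < A) (hv : 0 < v) (hAv : A ≤ v)
    (hFv : f ^ p ≤ F * v ^ (p - 1)) :
    0 ≤ (p / (p - 1)) ^ p * F - (p ^ p / (p - 1)) * f ^ p / (A + (p - 1) * v) ^ (p - 1) ∧
    (p / (p - 1)) ^ p * F - (p ^ p / (p - 1)) * f ^ p / (A + (p - 1) * v) ^ (p - 1) ≤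
      (p / (p - 1)) ^ p * F := by
  have hp0 : 0 < p := by linarith
  have hq : 0 < p - 1 := by linarith
  have hd : 0 < A + (p - 1) * v := by nlinarith
  have hdp : 0 < (A + (p - 1) * v) ^ (p - 1) := Real.rpow_pos_of_pos hd _
  have ha : 0 < (p - 1) ^ (p - 1) := Real.rpow_pos_of_pos hq _
  have hP : 0 < p ^ p := Real.rpow_pos_of_pos hp0 _
  have hfp : 0 ≤ f ^ p := Real.rpow_nonneg hf _
  have hK : 0 ≤ p ^ p / (p - 1) := le_of_lt (div_pos hP hq)
  constructor
  · rw [sub_nonneg, div_le_iff₀ hdp]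
    have h1 : ((p - 1) * v) ^ (p - 1) ≤ (A + (p - 1) * v) ^ (p - 1) :=
      Real.rpow_le_rpow (by positivity) (by linarith) hq.le
    have h2 : ((p - 1) * v) ^ (p - 1) = (p - 1) ^ (p - 1) * v ^ (p - 1) :=
      Real.mul_rpow hq.le hv.le
    have h3 : (p / (p - 1)) ^ p = p ^ p / (p - 1) ^ p := Real.div_rpow hp0.le hq.le p
    have h4 : (p - 1) ^ p = (p - 1) ^ (p - 1) * (p - 1) := by
      have := Real.rpow_add hq (p - 1) 1
      rw [Real.rpow_one, show p - 1 + 1 = p from by ring] at this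
      exact this
    have key : (p - 1) ^ (p - 1) * f ^ p ≤ F * (A + (p - 1) * v) ^ (p - 1) := by
      calc (p - 1) ^ (p - 1) * f ^ p
          ≤ (p - 1) ^ (p - 1) * (F * v ^ (p - 1)) :=
            mul_le_mul_of_nonneg_left hFv ha.le
        _ = F * ((p - 1) * v) ^ (p - 1) := by rw [h2]; ring
        _ ≤ F * (A + (p - 1) * v) ^ (p - 1) := mul_le_mul_of_nonneg_left h1 hF
    rw [h3, h4, div_mul_eq_mul_div, div_mul_eq_mul_div, div_mul_eq_mul_div,
      div_le_div_iff₀ hq (by positivity)]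
    nlinarith [mul_le_mul_of_nonneg_left key (le_of_lt (mul_pos hP hq))]
  · have : 0 ≤ (p ^ p / (p - 1)) * f ^ p / (A + (p - 1) * v) ^ (p - 1) :=
      div_nonneg (mul_nonneg hK hfp) hdp.le
    linarith
end

section
/- Let B(F,f,A,v) = (p/(p-1))^p F − (p^p/(p-1)) f^p/(A+(p-1)v)^(p-1) on D. For (F,f,A,v) ∈ D and 0 ≤ c < A with (F,f,A−c,v) ∈ D, one has B(F,f,A,v) − B(F,f,A−c,v) ≥ p^p · f^p/(A+(p-1)v)^p · c. -/
/-!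
With `s = A + (p-1)v` and `t = s - c`, the difference of the two Bellman values is
`p^p/(p-1) · f^p · (g t - g s)` for the convex function `g x = x^(1-p)`, whose slope at `s` is
`-(p-1) s^(-p)`. The tangent-line inequality for `g` at `s`, obtained from Bernoulli's inequality
for `x ↦ x^p`, gives the bound.
-/

lemma Real.rpow_add_mul_rpow_sub_one_mul_sub_le_rpow {p : ℝ} (hp : 1 ≤ p) {t s : ℝ}
    (ht : 0 < t) (hs : 0 ≤ s) : t ^ p + p * t ^ (p - 1) * (s - t) ≤ s ^ p := by
  have hbernoulli := one_add_mul_self_le_rpow_one_add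
    (by linarith [div_nonneg hs ht.le] : (-1 : ℝ) ≤ s / t - 1) hp
  rw [add_sub_cancel, Real.div_rpow hs ht.le, le_div_iff₀ (by positivity)] at hbernoulli
  have htp : t ^ p = t ^ (p - 1) * t := by
    rw [← Real.rpow_add_one ht.ne', sub_add_cancel]
  calc t ^ p + p * t ^ (p - 1) * (s - t) = (1 + p * (s / t - 1)) * t ^ p := by
        rw [htp]; field_simp
    _ ≤ s ^ p := hbernoulli

lemma Real.sub_one_mul_sub_div_rpow_le_one_div_rpow_sub_one_sub {p : ℝ} (hp : 1 ≤ p) {t s : ℝ}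
    (ht : 0 < t) (hs : 0 < s) :
    (p - 1) * (s - t) / s ^ p ≤ 1 / t ^ (p - 1) - 1 / s ^ (p - 1) := by
  have htp : t ^ p = t ^ (p - 1) * t := by
    rw [← Real.rpow_add_one ht.ne', sub_add_cancel]
  have hsp : s ^ p = s ^ (p - 1) * s := by
    rw [← Real.rpow_add_one hs.ne', sub_add_cancel]
  have hgap : 1 / t ^ (p - 1) - 1 / s ^ (p - 1) - (p - 1) * (s - t) / s ^ p =
      (s ^ p - (t ^ p + p * t ^ (p - 1) * (s - t))) / (t ^ (p - 1) * s ^ p) := by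
    rw [htp, hsp]; field_simp; ring
  have htangent := Real.rpow_add_mul_rpow_sub_one_mul_sub_le_rpow hp ht hs.le
  rw [← sub_nonneg, hgap]
  exact div_nonneg (sub_nonneg.mpr htangent) (by positivity)

theorem bellman_drift_increment_general (p : ℝ) (hp : 1 < p) (F f A v c : ℝ)
    (hf : 0 ≤ f) (hA : 0 < A) (hv : 0 < v) (hcA : c < A) :
    ((p / (p - 1)) ^ p * F - (p ^ p / (p - 1)) * f ^ p / (A + (p - 1) * v) ^ (p - 1)) -
      ((p / (p - 1)) ^ p * F - (p ^ p / (p - 1)) * f ^ p / (A - c + (p - 1) * v) ^ (p - 1)) ≥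
      p ^ p * f ^ p / (A + (p - 1) * v) ^ p * c := by
  set s := A + (p - 1) * v
  set t := A - c + (p - 1) * v
  have hp1 : 0 < p - 1 := by linarith
  have ht : 0 < t := by have := mul_pos hp1 hv; simp only [t]; linarith
  have hs : 0 < s := by positivity
  have hconvex := Real.sub_one_mul_sub_div_rpow_le_one_div_rpow_sub_one_sub hp.le ht hs
  rw [show s - t = c by ring] at hconvex
  rw [ge_iff_le]
  calc p ^ p * f ^ p / s ^ p * c = p ^ p / (p - 1) * f ^ p * ((p - 1) * c / s ^ p) := by
        field_simp
    _ ≤ p ^ p / (p - 1) * f ^ p * (1 / t ^ (p - 1) - 1 / s ^ (p - 1)) := by gcongr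
    _ = _ := by ring

theorem bellman_drift_increment (p : ℝ) (hp : 1 < p) (F f A v c : ℝ)
    (hF : 0 ≤ F) (hf : 0 ≤ f) (hA : 0 < A) (hv : 0 < v) (hAv : A ≤ v)
    (hFv : f ^ p ≤ F * v ^ (p - 1)) (hc : 0 ≤ c) (hcA : c < A)
    (hAcv : A - c ≤ v) :
    ((p / (p - 1)) ^ p * F - (p ^ p / (p - 1)) * f ^ p / (A + (p - 1) * v) ^ (p - 1)) -
      ((p / (p - 1)) ^ p * F - (p ^ p / (p - 1)) * f ^ p / (A - c + (p - 1) * v) ^ (p - 1)) ≥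
      p ^ p * f ^ p / (A + (p - 1) * v) ^ p * c :=
  bellman_drift_increment_general p hp F f A v c hf hA hv hcA
end

section
/- Main inequality for the Bellman function: Let 1 < p < ∞, p' = p/(p-1), and let (F₋,f₋,A₋,v₋), (F₊,f₊,A₊,v₊) ∈ D. Set F̃ = (F₋+F₊)/2, f̃ = (f₋+f₊)/2, Ã = (A₋+A₊)/2, ṽ = (v₋+v₊)/2. For any a, b, c ≥ 0, if (F, f, A, v) = (F̃ + b^p, f̃ + ab, Ã + c, ṽ + a^(p')) lies in D, then B(F,f,A,v) − ½[B(F₋,f₋,A₋,v₋) + B(F₊,f₊,A₊,v₊)] ≥ p^p · f^p/(A+(p-1)v)^p · c. -/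
/-!
The map `G (g, s) = g ^ p / s ^ (p - 1)` is convex and positively homogeneous of degree one, so
it lies above its tangent planes through the origin,
`G (g, s) ≥ p t ^ (p - 1) g - (p - 1) t ^ p s` for `t ≥ 0` (Young's inequality),
with equality at `(g, s) = (f, r)`, `t = f / r`. Applied at `(f, R)`, `R = A + (p - 1) v`, to both
endpoints, this bounds `G (f, R)` minus the average of the endpoint values by
`p t ^ (p - 1) a b - (p - 1) t ^ p (c + (p - 1) a ^ p')`. Young's inequality once more absorbs the
`a b` term into the gain `p' ^ p b ^ p` of the `F` variable, and what is left is
`(p ^ p / (p - 1)) (p - 1) t ^ p c = p ^ p (f / R) ^ p c`.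
-/

/-- The domain `D` of the Bellman function. -/
def bellmanDomain (p : ℝ) : Set (ℝ × ℝ × ℝ × ℝ) :=
  {x | 0 ≤ x.1 ∧ 0 ≤ x.2.1 ∧ 0 < x.2.2.1 ∧ 0 < x.2.2.2 ∧ x.2.2.1 ≤ x.2.2.2 ∧
    x.2.1 ^ p ≤ x.1 * x.2.2.2 ^ (p - 1)}

/-- The Bellman function `B`. -/
noncomputable def bellmanB (p : ℝ) (x : ℝ × ℝ × ℝ × ℝ) : ℝ :=
  (p / (p - 1)) ^ p * x.1 - (p ^ p / (p - 1)) * x.2.1 ^ p / (x.2.2.1 + (p - 1) * x.2.2.2) ^ (p - 1)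

namespace Real

variable {p : ℝ}

theorem rpow_sub_one_mul_self (hp : p ≠ 0) {x : ℝ} (hx : 0 ≤ x) :
    x ^ (p - 1) * x = x ^ p := by
  rw [← rpow_add_one' hx (by simpa using hp), sub_add_cancel]

theorem mul_rpow_sub_one_mul_le (hp : 1 < p) {u w : ℝ} (hu : 0 ≤ u) (hw : 0 ≤ w) :
    p * (u ^ (p - 1) * w) ≤ w ^ p + (p - 1) * u ^ p := by
  have young := young_inequality_of_nonneg hw (rpow_nonneg hu (p - 1))
    (HolderConjugate.conjExponent hp)
  rw [conjExponent, ← rpow_mul hu, mul_div_cancel₀ _ (sub_pos.2 hp).ne'] at young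
  calc p * (u ^ (p - 1) * w) = p * (w * u ^ (p - 1)) := by ring
    _ ≤ p * (w ^ p / p + u ^ p / (p / (p - 1))) := by gcongr
    _ = w ^ p + (p - 1) * u ^ p := by field_simp

theorem mul_div_rpow_eq_rpow_div_rpow_sub_one {f r : ℝ} (hf : 0 ≤ f) (hr : 0 < r) :
    r * (f / r) ^ p = f ^ p / r ^ (p - 1) := by
  rw [div_rpow hf hr.le, rpow_sub_one hr.ne']
  field_simp

theorem tangent_le_rpow_div_rpow_sub_one (hp : 1 < p) {t g s : ℝ} (ht : 0 ≤ t) (hg : 0 ≤ g)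
    (hs : 0 < s) : p * (t ^ (p - 1) * g) - (p - 1) * (t ^ p * s) ≤ g ^ p / s ^ (p - 1) := by
  have h := mul_le_mul_of_nonneg_left (mul_rpow_sub_one_mul_le hp ht (div_nonneg hg hs.le)) hs.le
  rw [← mul_div_rpow_eq_rpow_div_rpow_sub_one hg hs]
  calc p * (t ^ (p - 1) * g) - (p - 1) * (t ^ p * s)
      = s * (p * (t ^ (p - 1) * (g / s))) - s * ((p - 1) * t ^ p) := by field_simp
    _ ≤ s * (g / s) ^ p := by linarith

theorem rpow_div_rpow_sub_one_eq_tangent (hp : 1 < p) {f r : ℝ} (hf : 0 ≤ f) (hr : 0 < r) :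
    f ^ p / r ^ (p - 1) = p * ((f / r) ^ (p - 1) * f) - (p - 1) * ((f / r) ^ p * r) := by
  have hfr : (f / r) ^ (p - 1) * f = (f / r) ^ p * r := by
    rw [← rpow_sub_one_mul_self (by linarith : p ≠ 0) (div_nonneg hf hr.le), mul_assoc (_ ^ _),
      div_mul_cancel₀ f hr.ne']
  rw [hfr, ← mul_div_rpow_eq_rpow_div_rpow_sub_one hf hr]
  ring

theorem rpow_div_rpow_sub_one_add_gradient_le (hp : 1 < p) {f r g s : ℝ} (hf : 0 ≤ f)
    (hr : 0 < r) (hg : 0 ≤ g) (hs : 0 < s) :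
    f ^ p / r ^ (p - 1) + p * (f / r) ^ (p - 1) * (g - f) - (p - 1) * (f / r) ^ p * (s - r)
      ≤ g ^ p / s ^ (p - 1) := by
  have h := tangent_le_rpow_div_rpow_sub_one hp (div_nonneg hf hr.le) hg hs
  rw [rpow_div_rpow_sub_one_eq_tangent hp hf hr]
  linarith

end Real

open Real in
theorem bellman_cross_term_le {p : ℝ} (hp : 1 < p) {a b t : ℝ} (ha : 0 ≤ a) (hb : 0 ≤ b)
    (ht : 0 ≤ t) :
    p ^ p / (p - 1) * (p * (t ^ (p - 1) * (a * b))) ≤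
      (p / (p - 1)) ^ p * b ^ p + p ^ p * (p - 1) * (t ^ p * a ^ (p / (p - 1))) := by
  have hp1 : 0 < p - 1 := sub_pos.2 hp
  have hu : 0 ≤ a ^ (1 / (p - 1)) * t := mul_nonneg (rpow_nonneg ha _) ht
  have young := mul_rpow_sub_one_mul_le hp (mul_nonneg hp1.le hu) hb
  have hu_pow_sub_one :
      ((p - 1) * (a ^ (1 / (p - 1)) * t)) ^ (p - 1) = (p - 1) ^ (p - 1) * (a * t ^ (p - 1)) := by
    rw [mul_rpow hp1.le hu, mul_rpow (rpow_nonneg ha _) ht, ← rpow_mul ha,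
      one_div_mul_cancel hp1.ne', rpow_one]
  have hu_pow :
      ((p - 1) * (a ^ (1 / (p - 1)) * t)) ^ p = (p - 1) ^ p * (a ^ (p / (p - 1)) * t ^ p) := by
    rw [mul_rpow hp1.le hu, mul_rpow (rpow_nonneg ha _) ht, ← rpow_mul ha, one_div_mul_eq_div]
  rw [hu_pow_sub_one, hu_pow] at young
  have hK : (p / (p - 1)) ^ p * (p - 1) ^ p = p ^ p := by
    rw [← mul_rpow (by positivity) hp1.le, div_mul_cancel₀ _ hp1.ne']
  have hK' : (p / (p - 1)) ^ p * (p - 1) ^ (p - 1) = p ^ p / (p - 1) := by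
    rw [eq_div_iff hp1.ne', mul_assoc, rpow_sub_one_mul_self (by linarith) hp1.le, hK]
  linear_combination (p / (p - 1)) ^ p * young
    - (p * (a * t ^ (p - 1) * b)) * hK' + ((p - 1) * (a ^ (p / (p - 1)) * t ^ p)) * hK

theorem bellmanDomain.add_sub_one_mul_pos {p F f A v : ℝ} (hp : 1 < p)
    (hx : (F, f, A, v) ∈ bellmanDomain p) : 0 < A + (p - 1) * v :=
  add_pos hx.2.2.1 (mul_pos (sub_pos.2 hp) hx.2.2.2.1)

theorem bellman_main_inequality_general (p p' : ℝ) (hp : 1 < p) (hp' : p' = p / (p - 1))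
    (Fm fm Am vm Fp fp Ap vp : ℝ)
    (hm : (Fm, fm, Am, vm) ∈ bellmanDomain p)
    (hpl : (Fp, fp, Ap, vp) ∈ bellmanDomain p)
    (a b c : ℝ) (ha : 0 ≤ a) (hb : 0 ≤ b)
    (F f A v : ℝ)
    (hF : F = (Fm + Fp) / 2 + b ^ p)
    (hf : f = (fm + fp) / 2 + a * b)
    (hA : A = (Am + Ap) / 2 + c)
    (hv : v = (vm + vp) / 2 + a ^ p')
    (hx : (F, f, A, v) ∈ bellmanDomain p) :
    bellmanB p (F, f, A, v) -
      (1 / 2) * (bellmanB p (Fm, fm, Am, vm) + bellmanB p (Fp, fp, Ap, vp)) ≥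
      p ^ p * f ^ p / (A + (p - 1) * v) ^ p * c := by
  subst hp'
  have hR := bellmanDomain.add_sub_one_mul_pos hp hx
  have hf0 : 0 ≤ f := hx.2.1
  set R := A + (p - 1) * v
  set t := f / R
  have hG : f ^ p / R ^ (p - 1) -
        (fm ^ p / (Am + (p - 1) * vm) ^ (p - 1) + fp ^ p / (Ap + (p - 1) * vp) ^ (p - 1)) / 2
      ≤ p * t ^ (p - 1) * (a * b) - (p - 1) * t ^ p * (c + (p - 1) * a ^ (p / (p - 1))) := by
    have gradm := Real.rpow_div_rpow_sub_one_add_gradient_le hp hf0 hR (g := fm) hm.2.1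
      (bellmanDomain.add_sub_one_mul_pos hp hm)
    have gradp := Real.rpow_div_rpow_sub_one_add_gradient_le hp hf0 hR (g := fp) hpl.2.1
      (bellmanDomain.add_sub_one_mul_pos hp hpl)
    linear_combination (gradm + gradp) / 2 + p * t ^ (p - 1) * hf - (p - 1) * t ^ p * hA
      - (p - 1) ^ 2 * t ^ p * hv
  have young := bellman_cross_term_le hp ha hb (div_nonneg hf0 hR.le)
  have hL : p ^ p / (p - 1) * (p - 1) = p ^ p := div_mul_cancel₀ _ (sub_pos.2 hp).ne'
  have hRHS : p ^ p * f ^ p / R ^ p * c = p ^ p * t ^ p * c := by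
    rw [Real.div_rpow hf0 hR.le]; ring
  simp only [bellmanB, ge_iff_le]
  linear_combination p ^ p / (p - 1) * hG + young + hRHS - (p / (p - 1)) ^ p * hF
    - (t ^ p * c + (p - 1) * t ^ p * a ^ (p / (p - 1))) * hL

theorem bellman_main_inequality (p p' : ℝ) (hp : 1 < p) (hp' : p' = p / (p - 1))
    (Fm fm Am vm Fp fp Ap vp : ℝ)
    (hm : (Fm, fm, Am, vm) ∈ bellmanDomain p)
    (hpl : (Fp, fp, Ap, vp) ∈ bellmanDomain p)
    (a b c : ℝ) (ha : 0 ≤ a) (hb : 0 ≤ b) (hc : 0 ≤ c)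
    (F f A v : ℝ)
    (hF : F = (Fm + Fp) / 2 + b ^ p)
    (hf : f = (fm + fp) / 2 + a * b)
    (hA : A = (Am + Ap) / 2 + c)
    (hv : v = (vm + vp) / 2 + a ^ p')
    (hx : (F, f, A, v) ∈ bellmanDomain p) :
    bellmanB p (F, f, A, v) -
      (1 / 2) * (bellmanB p (Fm, fm, Am, vm) + bellmanB p (Fp, fp, Ap, vp)) ≥
      p ^ p * f ^ p / (A + (p - 1) * v) ^ p * c :=
  bellman_main_inequality_general p p' hp hp' Fm fm Am vm Fp fp Ap vp hm hpl a b c ha hb F f A v hF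
    hf hA hv hx
end

section
/- Weak main inequality: Under the hypotheses of the main inequality lemma (with x = (F,f,A,v) ∈ D obtained by x = x̃ + (b^p, ab, c, a^(p')), x̃ the midpoint of x₋, x₊ ∈ D, and a,b,c ≥ 0), one has B(x) − ½[B(x₋) + B(x₊)] ≥ (f^p / v^p) c. -/
open Real

noncomputable def powPerspective (p f s : ℝ) : ℝ := f ^ p / s ^ (p - 1)

lemma tangent_le_powPerspective {p f s t : ℝ} (hp : 1 < p) (hf : 0 ≤ f) (hs : 0 < s)
    (ht : 0 ≤ t) :
    p * t ^ (p - 1) * f - (p - 1) * t ^ p * s ≤ powPerspective p f s := by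
  have hp0 : 0 < p := by linarith
  have hconj : p.HolderConjugate (p / (p - 1)) := HolderConjugate.conjExponent hp
  have hsr : 0 < s ^ ((p - 1) / p) := rpow_pos_of_pos hs _
  -- Young's inequality for `f s^(-(p-1)/p)` and `t^(p-1) s^((p-1)/p)`
  have young := young_inequality_of_nonneg (div_nonneg hf hsr.le)
    (mul_nonneg (rpow_nonneg ht (p - 1)) hsr.le) hconj
  have hprod : f / s ^ ((p - 1) / p) * (t ^ (p - 1) * s ^ ((p - 1) / p)) = t ^ (p - 1) * f := by
    field_simp
  have hfst : (f / s ^ ((p - 1) / p)) ^ p = f ^ p / s ^ (p - 1) := by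
    rw [div_rpow hf hsr.le, ← rpow_mul hs.le, div_mul_cancel₀ _ hp0.ne']
  have hsnd : (t ^ (p - 1) * s ^ ((p - 1) / p)) ^ (p / (p - 1)) = t ^ p * s := by
    have hp1 : p - 1 ≠ 0 := by linarith
    have hexp : (p - 1) / p * (p / (p - 1)) = 1 := by field_simp
    rw [mul_rpow (rpow_nonneg ht _) hsr.le, ← rpow_mul ht, ← rpow_mul hs.le,
      mul_div_cancel₀ _ hp1, hexp, rpow_one]
  rw [hprod, hfst, hsnd] at young
  unfold powPerspective
  have := mul_le_mul_of_nonneg_left young hp0.le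
  field_simp at this ⊢
  linarith

lemma powPerspective_eq_tangent {p f s : ℝ} (hp : p ≠ 0) (hf : 0 ≤ f) (hs : 0 < s) :
    powPerspective p f s = p * (f / s) ^ (p - 1) * f - (p - 1) * (f / s) ^ p * s := by
  unfold powPerspective
  rcases hf.eq_or_lt with rfl | hf
  · simp [zero_rpow hp]
  rw [div_rpow hf.le hs.le, div_rpow hf.le hs.le, rpow_sub_one hf.ne', rpow_sub_one hs.ne']
  field_simp
  ring

lemma powPerspective_midpoint_le {p f₁ s₁ f₂ s₂ : ℝ} (hp : 1 < p) (hf₁ : 0 ≤ f₁) (hs₁ : 0 < s₁)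
    (hf₂ : 0 ≤ f₂) (hs₂ : 0 < s₂) :
    powPerspective p ((f₁ + f₂) / 2) ((s₁ + s₂) / 2) ≤
      (powPerspective p f₁ s₁ + powPerspective p f₂ s₂) / 2 := by
  have ht : 0 ≤ (f₁ + f₂) / 2 / ((s₁ + s₂) / 2) := by positivity
  rw [powPerspective_eq_tangent (by linarith) (by positivity) (by positivity)]
  linarith [tangent_le_powPerspective hp hf₁ hs₁ ht, tangent_le_powPerspective hp hf₂ hs₂ ht]

lemma tangent_mul_le_rpow_div {p p' a b t : ℝ} (hp : 1 < p) (hp' : p' = p / (p - 1))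
    (ha : 0 ≤ a) (hb : 0 ≤ b) (ht : 0 ≤ t) :
    p * t ^ (p - 1) * (a * b) - (p - 1) * t ^ p * ((p - 1) * a ^ p') ≤
      b ^ p / (p - 1) ^ (p - 1) := by
  have hp1 : 0 < p - 1 := by linarith
  rcases ha.eq_or_lt with rfl | ha
  · have hp'0 : p' ≠ 0 := by rw [hp']; positivity
    simp only [zero_mul, mul_zero, zero_rpow hp'0, sub_zero]
    positivity
  have hap' : 0 < a ^ p' := rpow_pos_of_pos ha _
  convert tangent_le_powPerspective hp (mul_nonneg ha.le hb) (mul_pos hp1 hap') ht using 1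
  -- the weight `(p - 1) a^p'` is chosen so that `a` cancels, as `p' (p - 1) = p`
  have hexp : p' * (p - 1) = p := by rw [hp']; field_simp
  unfold powPerspective
  rw [mul_rpow ha.le hb, mul_rpow hp1.le hap'.le, ← rpow_mul ha.le, hexp]
  field_simp

lemma powPerspective_sub_midpoint_le {p p' f₁ s₁ f₂ s₂ a b c f s : ℝ} (hp : 1 < p)
    (hp' : p' = p / (p - 1)) (hf₁ : 0 ≤ f₁) (hs₁ : 0 < s₁) (hf₂ : 0 ≤ f₂) (hs₂ : 0 < s₂)
    (ha : 0 ≤ a) (hb : 0 ≤ b) (hc : 0 ≤ c)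
    (hf : f = (f₁ + f₂) / 2 + a * b) (hs : s = (s₁ + s₂) / 2 + c + (p - 1) * a ^ p') :
    powPerspective p f s - (powPerspective p f₁ s₁ + powPerspective p f₂ s₂) / 2 +
        (p - 1) * (f / s) ^ p * c ≤ b ^ p / (p - 1) ^ (p - 1) := by
  have hp1 : 0 < p - 1 := by linarith
  have hs0 : 0 < s := by rw [hs]; positivity
  have ht : 0 ≤ f / s := div_nonneg (by rw [hf]; positivity) hs0.le
  have hmid := powPerspective_midpoint_le hp hf₁ hs₁ hf₂ hs₂
  have htan := tangent_le_powPerspective hp (f := (f₁ + f₂) / 2) (s := (s₁ + s₂) / 2)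
    (by positivity) (by positivity) ht
  have hyoung := tangent_mul_le_rpow_div (b := b) hp hp' ha hb ht
  rw [powPerspective_eq_tangent (by linarith) (by rw [hf]; positivity) hs0]
  have hft : (f₁ + f₂) / 2 = f - a * b := by rw [hf]; ring
  have hst : (s₁ + s₂) / 2 = s - c - (p - 1) * a ^ p' := by rw [hs]; ring
  rw [hft, hst] at htan hmid
  linear_combination hmid + htan + hyoung

lemma bellmanB_eq (p : ℝ) (x : ℝ × ℝ × ℝ × ℝ) :
    bellmanB p x = (p / (p - 1)) ^ p * x.1 -
      p ^ p / (p - 1) * powPerspective p x.2.1 (x.2.2.1 + (p - 1) * x.2.2.2) := by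
  rw [bellmanB, powPerspective, mul_div_assoc]

lemma rpow_div_sub_one_mul_div_rpow {p : ℝ} (hp : 1 < p) (x : ℝ) :
    p ^ p / (p - 1) * (x / (p - 1) ^ (p - 1)) = (p / (p - 1)) ^ p * x := by
  have hp1 : 0 < p - 1 := by linarith
  rw [div_rpow (by linarith) hp1.le, rpow_sub_one hp1.ne']
  field_simp

lemma rpow_div_rpow_le_of_le_mul {p f v s : ℝ} (hp : 0 < p) (hf : 0 ≤ f) (hv : 0 < v)
    (hs : 0 < s) (hsv : s ≤ p * v) :
    f ^ p / v ^ p ≤ p ^ p * (f / s) ^ p := by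
  rw [← div_rpow hf hv.le, ← mul_rpow hp.le (by positivity)]
  refine rpow_le_rpow (by positivity) ?_ hp.le
  calc f / v = p * f / (p * v) := by field_simp
    _ ≤ p * f / s := div_le_div_of_nonneg_left (by positivity) hs hsv
    _ = p * (f / s) := mul_div_assoc _ _ _

theorem bellman_main_inequality_weak (p p' : ℝ) (hp : 1 < p) (hp' : p' = p / (p - 1))
    (Fm fm Am vm Fp fp Ap vp : ℝ)
    (hm : (Fm, fm, Am, vm) ∈ bellmanDomain p)
    (hpl : (Fp, fp, Ap, vp) ∈ bellmanDomain p)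
    (a b c : ℝ) (ha : 0 ≤ a) (hb : 0 ≤ b) (hc : 0 ≤ c)
    (F f A v : ℝ)
    (hF : F = (Fm + Fp) / 2 + b ^ p)
    (hf : f = (fm + fp) / 2 + a * b)
    (hA : A = (Am + Ap) / 2 + c)
    (hv : v = (vm + vp) / 2 + a ^ p')
    (hx : (F, f, A, v) ∈ bellmanDomain p) :
    bellmanB p (F, f, A, v) -
      (1 / 2) * (bellmanB p (Fm, fm, Am, vm) + bellmanB p (Fp, fp, Ap, vp)) ≥
      f ^ p / v ^ p * c := by
  simp only [bellmanDomain, Set.mem_ofPred_eq] at hm hpl hx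
  obtain ⟨-, hfm, hAm, hvm, -, -⟩ := hm
  obtain ⟨-, hfp, hAp, hvp, -, -⟩ := hpl
  obtain ⟨-, hf0, hA0, hv0, hAv, -⟩ := hx
  have hp1 : 0 < p - 1 := by linarith
  have hs_split : A + (p - 1) * v = ((Am + (p - 1) * vm) + (Ap + (p - 1) * vp)) / 2 + c +
      (p - 1) * a ^ p' := by rw [hA, hv]; ring
  have hs0 : 0 < A + (p - 1) * v := by positivity
  have key := powPerspective_sub_midpoint_le hp hp' hfm (by positivity) hfp (by positivity)
    ha hb hc hf hs_split
  have hdiv := rpow_div_rpow_le_of_le_mul (p := p) (by linarith) hf0 hv0 hs0 (by linarith)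
  simp only [bellmanB_eq, hF]
  have hK : p ^ p / (p - 1) * (p - 1) = p ^ p := by field_simp
  linear_combination (p ^ p / (p - 1)) * key + c * hdiv + rpow_div_sub_one_mul_div_rpow hp (b ^ p)
    - (c * (f / (A + (p - 1) * v)) ^ p) * hK
end

section
/- Boundary limit of the Bellman function: Fix 1 < p < ∞, v ≥ A > 0, and F > 0. For 0 < t ≤ 1 let x(t) = (F, (F (t v)^(p-1))^(1/p), t² A, t v). Then x(t) ∈ D for all t ∈ (0,1], x(t) → (F, 0, 0, 0) as t → 0⁺, and B(x(t)) → 0 as t → 0⁺. -/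
open Filter Topology

/-! The curve `x(t)` runs along the part `f ^ p = F * v ^ (p - 1)` of the boundary of `D`, and its
`A`-coordinate `t ^ 2 * A` shrinks faster than its `v`-coordinate `t * v`. Hence the factor
`t ^ (p - 1)` cancels from the second term of `B`, which tends to
`p ^ p / (p - 1) * F / (p - 1) ^ (p - 1)`; this is exactly the first term `(p / (p - 1)) ^ p * F`. -/

namespace Bellman

noncomputable def curve (p F A v t : ℝ) : ℝ × ℝ × ℝ × ℝ :=
  (F, (F * (t * v) ^ (p - 1)) ^ (1 / p), t ^ 2 * A, t * v)

theorem curve_snd_fst_rpow {p : ℝ} (hp : p ≠ 0) {F A v t : ℝ} (hF : 0 ≤ F) (hv : 0 ≤ v)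
    (ht : 0 ≤ t) : (curve p F A v t).2.1 ^ p = F * (t * v) ^ (p - 1) := by
  rw [curve, one_div, Real.rpow_inv_rpow (by positivity) hp]

theorem curve_mem_bellmanDomain {p : ℝ} (hp : p ≠ 0) {F A v t : ℝ} (hF : 0 ≤ F) (hA : 0 < A)
    (hAv : A ≤ v) (ht : t ∈ Set.Ioc (0 : ℝ) 1) : curve p F A v t ∈ bellmanDomain p := by
  obtain ⟨ht0, ht1⟩ := ht
  have hv : 0 < v := hA.trans_le hAv
  refine ⟨hF, by unfold curve; positivity, by unfold curve; positivity,
    mul_pos ht0 hv, ?_, (curve_snd_fst_rpow hp hF hv.le ht0.le).le⟩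
  calc t ^ 2 * A ≤ t * A := by gcongr; exact pow_le_of_le_one ht0.le ht1 two_ne_zero
    _ ≤ t * v := by gcongr

theorem tendsto_curve {p : ℝ} (hp : 1 < p) (F A v : ℝ) :
    Tendsto (curve p F A v) (𝓝 0) (𝓝 (F, 0, 0, 0)) := by
  have hcont : Continuous (curve p F A v) := by
    unfold curve
    fun_prop (disch := first | positivity | (right; linarith))
  have hp0 : p ≠ 0 := by positivity
  have hp1 : p - 1 ≠ 0 := by linarith
  simpa [curve, Real.zero_rpow (inv_ne_zero hp0), Real.zero_rpow hp1] using hcont.tendsto 0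

theorem bellmanB_curve {p : ℝ} (hp : 1 ≤ p) {F A v t : ℝ} (hF : 0 ≤ F) (hA : 0 ≤ A) (hv : 0 < v)
    (ht : 0 < t) : bellmanB p (curve p F A v t) = (p / (p - 1)) ^ p * F -
      p ^ p / (p - 1) * (F * v ^ (p - 1)) / (t * A + (p - 1) * v) ^ (p - 1) := by
  have hp1 : 0 ≤ p - 1 := by linarith
  have hsum : 0 ≤ t * A + (p - 1) * v := by positivity
  rw [bellmanB, curve_snd_fst_rpow (by positivity) hF hv.le ht.le]
  simp only [curve]
  rw [show t ^ 2 * A + (p - 1) * (t * v) = t * (t * A + (p - 1) * v) by ring,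
    Real.mul_rpow ht.le hsum, Real.mul_rpow ht.le hv.le]
  have : 0 < t ^ (p - 1) := by positivity
  field_simp

theorem div_sub_one_rpow_self {p : ℝ} (hp : 1 < p) :
    (p / (p - 1)) ^ p = p ^ p / (p - 1) / (p - 1) ^ (p - 1) := by
  have hp1 : 0 < p - 1 := by linarith
  rw [Real.div_rpow (by positivity) hp1.le, div_div, ← Real.rpow_one_add' hp1.le (by positivity)]
  ring_nf

theorem tendsto_bellmanB_curve {p : ℝ} (hp : 1 < p) {F A v : ℝ} (hF : 0 ≤ F) (hA : 0 ≤ A)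
    (hv : 0 < v) : Tendsto (fun t ↦ bellmanB p (curve p F A v t)) (𝓝[>] 0) (𝓝 0) := by
  have hp1 : 0 < p - 1 := by linarith
  set g : ℝ → ℝ := fun t ↦ (p / (p - 1)) ^ p * F -
    p ^ p / (p - 1) * (F * v ^ (p - 1)) / (t * A + (p - 1) * v) ^ (p - 1)
  have hg_cont : ContinuousAt g 0 := by
    fun_prop (disch := first | positivity | (simp; positivity))
  have hg_zero : g 0 = 0 := by
    simp only [g]
    rw [zero_mul, zero_add, Real.mul_rpow hp1.le hv.le, div_sub_one_rpow_self hp]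
    have : 0 < v ^ (p - 1) := by positivity
    have : 0 < (p - 1) ^ (p - 1) := by positivity
    field_simp
    ring
  have hg : Tendsto g (𝓝[>] 0) (𝓝 0) := by
    simpa only [hg_zero] using hg_cont.tendsto.mono_left nhdsWithin_le_nhds
  refine hg.congr' (eventually_nhdsWithin_of_forall fun t ht ↦ ?_)
  exact (bellmanB_curve hp.le hF hA hv ht).symm

end Bellman

theorem bellman_boundary_limit (p : ℝ) (hp : 1 < p) (F A v : ℝ)
    (hF : 0 < F) (hA : 0 < A) (hAv : A ≤ v) :
    (∀ t ∈ Set.Ioc (0 : ℝ) 1,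
        ((F, (F * (t * v) ^ (p - 1)) ^ (1 / p), t ^ 2 * A, t * v) : ℝ × ℝ × ℝ × ℝ) ∈
          bellmanDomain p) ∧
    Tendsto (fun t : ℝ =>
        ((F, (F * (t * v) ^ (p - 1)) ^ (1 / p), t ^ 2 * A, t * v) : ℝ × ℝ × ℝ × ℝ))
      (𝓝[>] 0) (𝓝 (F, 0, 0, 0)) ∧
    Tendsto (fun t : ℝ =>
        bellmanB p (F, (F * (t * v) ^ (p - 1)) ^ (1 / p), t ^ 2 * A, t * v))
      (𝓝[>] 0) (𝓝 0) :=
  ⟨fun _ ↦ Bellman.curve_mem_bellmanDomain (zero_lt_one.trans hp).ne' hF.le hA hAv,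
    (Bellman.tendsto_curve hp F A v).mono_left nhdsWithin_le_nhds,
    Bellman.tendsto_bellmanB_curve hp hF.le hA.le (hA.trans_le hAv)⟩
end

section
/- The liminf of B at boundary points of the form (F, 0, 0, 0) is 0: for every F ≥ 0, liminf_{y → (F,0,0,0), y ∈ D} B(y) = 0. -/
open Filter Topology

/-! `B ≥ 0` on `D` because `f ^ p ≤ F v ^ (p - 1)` and `A + (p - 1) v ≥ (p - 1) v`, which turns
the subtracted term into at most `(p / (p - 1)) ^ p F`. Along the curve
`t ↦ (F, (F t ^ (p - 1)) ^ (1 / p), t ^ 2, t)`, which lies in `D` and tends to `(F, 0, 0, 0)`,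
the constraint is an equality and `A = t v` is negligible against `v`, so `B` tends to `0`.
A function bounded below by `a` along a filter and tending to `a` along some curve into that
filter has liminf `a`. -/

theorem Filter.liminf_eq_of_eventually_ge_of_tendsto_comp {α β : Type*} {f : α → ℝ}
    {l : Filter α} {l' : Filter β} [l'.NeBot] {φ : β → α} {a : ℝ}
    (hge : ∀ᶠ x in l, a ≤ f x) (hφ : Tendsto φ l' l) (hfφ : Tendsto (f ∘ φ) l' (𝓝 a)) :
    liminf f l = a := by
  rw [liminf_eq]
  refine IsGreatest.csSup_eq ⟨hge, fun b hb => ge_of_tendsto hfφ ?_⟩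
  exact hφ.eventually hb

lemma div_sub_one_rpow_eq {p : ℝ} (hp : 1 < p) :
    (p / (p - 1)) ^ p = p ^ p / (p - 1) / (p - 1) ^ (p - 1) := by
  have hp1 : 0 < p - 1 := by linarith
  rw [Real.div_rpow (by linarith) hp1.le, div_div, ← Real.rpow_one_add' hp1.le (by linarith),
    add_sub_cancel]

lemma bellmanB_nonneg {p : ℝ} (hp : 1 < p) {x : ℝ × ℝ × ℝ × ℝ} (hx : x ∈ bellmanDomain p) :
    0 ≤ bellmanB p x := by
  obtain ⟨F, f, A, v⟩ := x
  obtain ⟨hF, -, hA, hv, -, hf⟩ := hx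
  dsimp only at hF hA hv hf
  have hp1 : 0 < p - 1 := by linarith
  have hden : ((p - 1) * v) ^ (p - 1) ≤ (A + (p - 1) * v) ^ (p - 1) :=
    Real.rpow_le_rpow (by positivity) (by linarith) hp1.le
  have hterm : p ^ p / (p - 1) * f ^ p / (A + (p - 1) * v) ^ (p - 1) ≤ (p / (p - 1)) ^ p * F :=
    calc p ^ p / (p - 1) * f ^ p / (A + (p - 1) * v) ^ (p - 1)
        ≤ p ^ p / (p - 1) * (F * v ^ (p - 1)) / ((p - 1) * v) ^ (p - 1) :=
          div_le_div₀ (by positivity) (by gcongr) (by positivity) hden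
      _ = (p / (p - 1)) ^ p * F := by
          rw [Real.mul_rpow hp1.le hv.le, div_sub_one_rpow_eq hp]
          field_simp
  simp only [bellmanB]
  linarith

noncomputable def bellmanCurve (p F t : ℝ) : ℝ × ℝ × ℝ × ℝ :=
  (F, (F * t ^ (p - 1)) ^ p⁻¹, t ^ 2, t)

lemma bellmanCurve_fst_rpow {p F t : ℝ} (hp : p ≠ 0) (hF : 0 ≤ F) (ht : 0 ≤ t) :
    (bellmanCurve p F t).2.1 ^ p = F * t ^ (p - 1) :=
  Real.rpow_inv_rpow (by positivity) hp

lemma bellmanCurve_mem {p F t : ℝ} (hp : p ≠ 0) (hF : 0 ≤ F) (ht : t ∈ Set.Ioc 0 1) :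
    bellmanCurve p F t ∈ bellmanDomain p := by
  obtain ⟨ht0, ht1⟩ := ht
  refine ⟨hF, by unfold bellmanCurve; positivity, by unfold bellmanCurve; positivity, ht0, ?_,
    (bellmanCurve_fst_rpow hp hF ht0.le).le⟩
  change t ^ 2 ≤ t
  nlinarith

lemma bellmanB_bellmanCurve {p F t : ℝ} (hp : 1 < p) (hF : 0 ≤ F) (ht : 0 < t) :
    bellmanB p (bellmanCurve p F t) =
      (p / (p - 1)) ^ p * F - p ^ p / (p - 1) * F / (t + (p - 1)) ^ (p - 1) := by
  have hsplit : t ^ 2 + (p - 1) * t = t * (t + (p - 1)) := by ring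
  rw [bellmanB, bellmanCurve_fst_rpow (by linarith) hF ht.le]
  simp only [bellmanCurve]
  rw [hsplit, Real.mul_rpow ht.le (by linarith)]
  have htp : 0 < t ^ (p - 1) := by positivity
  field_simp

lemma tendsto_bellmanCurve {p : ℝ} (hp : 1 < p) (F : ℝ) :
    Tendsto (bellmanCurve p F) (𝓝 0) (𝓝 (F, 0, 0, 0)) := by
  have hcont : Continuous (bellmanCurve p F) := by
    unfold bellmanCurve
    have hp0 : 0 < p := by linarith
    have hp1 : 0 < p - 1 := by linarith
    fun_prop (disch := positivity)
  convert hcont.tendsto 0 using 2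
  simp [bellmanCurve, Real.zero_rpow (by linarith : p - 1 ≠ 0),
    Real.zero_rpow (by positivity : p⁻¹ ≠ 0)]

lemma tendsto_bellmanB_bellmanCurve {p : ℝ} (hp : 1 < p) {F : ℝ} (hF : 0 ≤ F) :
    Tendsto (bellmanB p ∘ bellmanCurve p F) (𝓝[>] 0) (𝓝 0) := by
  have hp1 : 0 < p - 1 := by linarith
  have hden : (0 + (p - 1)) ^ (p - 1) ≠ 0 := by positivity
  have hcont : ContinuousAt
      (fun t : ℝ => (p / (p - 1)) ^ p * F - p ^ p / (p - 1) * F / (t + (p - 1)) ^ (p - 1)) 0 := by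
    fun_prop (disch := first | exact hden | exact Or.inr hp1.le)
  have hzero : (p / (p - 1)) ^ p * F - p ^ p / (p - 1) * F / (0 + (p - 1)) ^ (p - 1) = 0 := by
    rw [zero_add, div_sub_one_rpow_eq hp]
    ring
  refine ((hzero ▸ hcont.tendsto).mono_left nhdsWithin_le_nhds).congr' ?_
  filter_upwards [self_mem_nhdsWithin] with t ht
  exact (bellmanB_bellmanCurve hp hF ht).symm

theorem bellman_liminf_boundary (p : ℝ) (hp : 1 < p) (F : ℝ) (hF : 0 ≤ F) :
    Filter.liminf (bellmanB p)
      (𝓝[bellmanDomain p] ((F, 0, 0, 0) : ℝ × ℝ × ℝ × ℝ)) = 0 := by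
  have hcurve : Tendsto (bellmanCurve p F) (𝓝[>] 0) (𝓝[bellmanDomain p] (F, 0, 0, 0)) := by
    refine tendsto_nhdsWithin_iff.mpr ⟨(tendsto_bellmanCurve hp F).mono_left nhdsWithin_le_nhds, ?_⟩
    filter_upwards [Ioc_mem_nhdsGT zero_lt_one] with t ht using
      bellmanCurve_mem (zero_lt_one.trans hp).ne' hF ht
  refine liminf_eq_of_eventually_ge_of_tendsto_comp ?_ hcurve (tendsto_bellmanB_bellmanCurve hp hF)
  filter_upwards [self_mem_nhdsWithin] with x hx using bellmanB_nonneg hp hx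
end

section
/- Hamilton–Jacobi–Bellman supersolution property: Let B(x₁,x₂,x₃,x₄) = (p/(p-1))^p x₁ − (p^p/(p-1)) x₂^p/(x₃+(p-1)x₄)^(p-1) on the interior of D. Then for every interior point x of D, every u = (u₁,u₂,u₃,u₄) ∈ ℝ⁴, and every u₅ ≥ 0: −(∂B/∂x₃)(x)·u₅ + ½ Σ_{i,j=1}^4 (∂²B/∂xᵢ∂xⱼ)(x) uᵢ uⱼ + p^p (x₂/(x₃+(p-1)x₄))^p u₅ ≤ 0. -/
open Filter Topology

section RpowMulRpow

variable {E : Type*} [NormedAddCommGroup E] [NormedSpace ℝ E] (a b : E →L[ℝ] ℝ) {y : E}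

theorem hasFDerivAt_rpow_mul_rpow (ha : a y ≠ 0) (hb : b y ≠ 0) (e f : ℝ) :
    HasFDerivAt (fun z => a z ^ e * b z ^ f)
      ((e * a y ^ (e - 1) * b y ^ f) • a + (f * a y ^ e * b y ^ (f - 1)) • b) y := by
  refine ((a.hasFDerivAt.rpow_const (Or.inl ha)).mul
    (b.hasFDerivAt.rpow_const (Or.inl hb))).congr_fderiv ?_
  ext z
  simp only [add_apply, smul_apply, smul_eq_mul]
  ring

theorem fderiv_rpow_mul_rpow_apply (ha : a y ≠ 0) (hb : b y ≠ 0) (e f : ℝ) (u : E) :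
    fderiv ℝ (fun z => a z ^ e * b z ^ f) y u =
      e * a u * (a y ^ (e - 1) * b y ^ f) + f * b u * (a y ^ e * b y ^ (f - 1)) := by
  rw [(hasFDerivAt_rpow_mul_rpow a b ha hb e f).fderiv]
  simp only [add_apply, smul_apply, smul_eq_mul]
  ring

theorem fderiv_fderiv_rpow_mul_rpow_one_sub_apply (ha : 0 < a y) (hb : 0 < b y) (p : ℝ) (u : E) :
    fderiv ℝ (fun z => fderiv ℝ (fun w => a w ^ p * b w ^ (1 - p)) z u) y u =
      p * (p - 1) * a y ^ (p - 2) * b y ^ (-p - 1) * (b y * a u - a y * b u) ^ 2 := by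
  have hpos : ∀ᶠ z in 𝓝 y, 0 < a z ∧ 0 < b z :=
    ((a.continuous.tendsto y).eventually (lt_mem_nhds ha)).and
      ((b.continuous.tendsto y).eventually (lt_mem_nhds hb))
  have hfirst : (fun z => fderiv ℝ (fun w => a w ^ p * b w ^ (1 - p)) z u) =ᶠ[𝓝 y]
      fun z => p * a u * (a z ^ (p - 1) * b z ^ (1 - p)) +
        (1 - p) * b u * (a z ^ p * b z ^ (1 - p - 1)) := by
    filter_upwards [hpos] with z hz
    exact fderiv_rpow_mul_rpow_apply a b hz.1.ne' hz.2.ne' p (1 - p) u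
  have hsecond : HasFDerivAt (fun z => p * a u * (a z ^ (p - 1) * b z ^ (1 - p)) +
      (1 - p) * b u * (a z ^ p * b z ^ (1 - p - 1))) _ y :=
    ((hasFDerivAt_rpow_mul_rpow a b ha.ne' hb.ne' _ _).const_mul _).add
      ((hasFDerivAt_rpow_mul_rpow a b ha.ne' hb.ne' _ _).const_mul _)
  rw [hfirst.fderiv_eq, hsecond.fderiv]
  simp only [add_apply, smul_apply, smul_eq_mul,
    Real.rpow_sub ha, Real.rpow_sub hb, Real.rpow_neg hb.le, Real.rpow_one, Real.rpow_two]
  field_simp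
  ring

end RpowMulRpow

noncomputable def proj₂ : (ℝ × ℝ × ℝ × ℝ) →L[ℝ] ℝ :=
  ContinuousLinearMap.fst ℝ ℝ (ℝ × ℝ) ∘L ContinuousLinearMap.snd ℝ ℝ (ℝ × ℝ × ℝ)

noncomputable def bellmanDenom (p : ℝ) : (ℝ × ℝ × ℝ × ℝ) →L[ℝ] ℝ :=
  ContinuousLinearMap.fst ℝ ℝ ℝ ∘L ContinuousLinearMap.snd ℝ ℝ (ℝ × ℝ) ∘L
      ContinuousLinearMap.snd ℝ ℝ (ℝ × ℝ × ℝ) +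
    (p - 1) • (ContinuousLinearMap.snd ℝ ℝ ℝ ∘L ContinuousLinearMap.snd ℝ ℝ (ℝ × ℝ) ∘L
      ContinuousLinearMap.snd ℝ ℝ (ℝ × ℝ × ℝ))

@[simp] theorem proj₂_apply (y : ℝ × ℝ × ℝ × ℝ) : proj₂ y = y.2.1 := rfl

@[simp] theorem bellmanDenom_apply (p : ℝ) (y : ℝ × ℝ × ℝ × ℝ) :
    bellmanDenom p y = y.2.2.1 + (p - 1) * y.2.2.2 := rfl

section Bellman

variable {p : ℝ} {y : ℝ × ℝ × ℝ × ℝ}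

theorem pos_of_mem_interior_bellmanDomain (hy : y ∈ interior (bellmanDomain p)) : 0 < y.2.1 := by
  have hmono : interior (bellmanDomain p) ⊆ interior ((Prod.fst ∘ Prod.snd) ⁻¹' Set.Ici 0) :=
    interior_mono fun z hz => hz.2.1
  rw [← (isOpenMap_fst.comp isOpenMap_snd).preimage_interior_eq_interior_preimage
    (continuous_fst.comp continuous_snd), interior_Ici] at hmono
  exact hmono hy

theorem bellmanDenom_pos (hp : 1 ≤ p) (hy : y ∈ bellmanDomain p) : 0 < bellmanDenom p y := by
  obtain ⟨-, -, hy₃, hy₄, -, -⟩ := hy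
  rw [bellmanDenom_apply]
  nlinarith

theorem bellmanB_eventuallyEq (hy : 0 < bellmanDenom p y) :
    bellmanB p =ᶠ[𝓝 y] fun z => (p / (p - 1)) ^ p * z.1 -
      p ^ p / (p - 1) * (proj₂ z ^ p * bellmanDenom p z ^ (1 - p)) := by
  filter_upwards [((bellmanDenom p).continuous.tendsto y).eventually (lt_mem_nhds hy)] with z hz
  rw [show 1 - p = -(p - 1) by ring, Real.rpow_neg hz.le]
  simp only [bellmanB, proj₂_apply, bellmanDenom_apply]
  ring

theorem fderiv_bellmanB_apply (hy₂ : y.2.1 ≠ 0) (hy : 0 < bellmanDenom p y)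
    (u : ℝ × ℝ × ℝ × ℝ) :
    fderiv ℝ (bellmanB p) y u = (p / (p - 1)) ^ p * u.1 -
      p ^ p / (p - 1) * fderiv ℝ (fun z => proj₂ z ^ p * bellmanDenom p z ^ (1 - p)) y u := by
  have hΦ := hasFDerivAt_rpow_mul_rpow proj₂ (bellmanDenom p) hy₂ hy.ne' p (1 - p)
  rw [(bellmanB_eventuallyEq hy).fderiv_eq, fderiv_fun_sub (by fun_prop)
    (hΦ.differentiableAt.const_mul _), fderiv_const_mul hΦ.differentiableAt,
    fderiv_const_mul differentiableAt_fst, fderiv_fst]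
  simp

theorem fderiv_bellmanB_apply_third (hp : p ≠ 1) (hy₂ : 0 < y.2.1) (hy : 0 < bellmanDenom p y) :
    fderiv ℝ (bellmanB p) y (0, 0, 1, 0) =
      p ^ p * (y.2.1 / (y.2.2.1 + (p - 1) * y.2.2.2)) ^ p := by
  rw [fderiv_bellmanB_apply hy₂.ne' hy,
    fderiv_rpow_mul_rpow_apply _ _ hy₂.ne' hy.ne', show 1 - p - 1 = -p by ring]
  rw [bellmanDenom_apply] at hy
  have hp' : p - 1 ≠ 0 := sub_ne_zero.2 hp
  simp only [proj₂_apply, bellmanDenom_apply, Real.div_rpow hy₂.le hy.le, Real.rpow_neg hy.le]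
  field_simp
  ring

theorem fderiv_fderiv_bellmanB_apply_nonpos (hp : 1 < p) (hy₂ : 0 < y.2.1)
    (hy : 0 < bellmanDenom p y) (u : ℝ × ℝ × ℝ × ℝ) :
    fderiv ℝ (fun z => fderiv ℝ (bellmanB p) z u) y u ≤ 0 := by
  have hev : (fun z => fderiv ℝ (bellmanB p) z u) =ᶠ[𝓝 y] fun z => (p / (p - 1)) ^ p * u.1 -
      ((p ^ p / (p - 1)) • fun z =>
        fderiv ℝ (fun w => proj₂ w ^ p * bellmanDenom p w ^ (1 - p)) z u) z := by
    filter_upwards [(proj₂.continuous.tendsto y).eventually (lt_mem_nhds hy₂),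
      ((bellmanDenom p).continuous.tendsto y).eventually (lt_mem_nhds hy)] with z hz₂ hz
    exact fderiv_bellmanB_apply hz₂.ne' hz u
  rw [hev.fderiv_eq, fderiv_const_sub, fderiv_const_smul_field, neg_apply, Pi.smul_apply,
    smul_apply, fderiv_fderiv_rpow_mul_rpow_one_sub_apply _ _ hy₂ hy, smul_eq_mul, neg_nonpos]
  positivity

end Bellman

/-- Here `∂₃B` is the derivative of `B` in the direction `(0,0,1,0)` and the quadratic form
`Σ uᵢuⱼ ∂ᵢⱼB` is the second directional derivative of `B` along `u`. -/
theorem bellman_HJB_supersolution_general (p : ℝ) (hp : 1 < p)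
    (x : ℝ × ℝ × ℝ × ℝ) (hx : x ∈ interior (bellmanDomain p))
    (u : ℝ × ℝ × ℝ × ℝ) (u5 : ℝ) :
    -(fderiv ℝ (bellmanB p) x ((0 : ℝ), (0 : ℝ), (1 : ℝ), (0 : ℝ))) * u5 +
      (1 / 2) * (fderiv ℝ (fun y => fderiv ℝ (bellmanB p) y u) x u) +
      p ^ p * (x.2.1 / (x.2.2.1 + (p - 1) * x.2.2.2)) ^ p * u5 ≤ 0 := by
  have hx₂ := pos_of_mem_interior_bellmanDomain hx
  have hden := bellmanDenom_pos hp.le (interior_subset hx)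
  rw [fderiv_bellmanB_apply_third hp.ne' hx₂ hden]
  linarith [fderiv_fderiv_bellmanB_apply_nonpos hp hx₂ hden u]

/-- Hamilton–Jacobi–Bellman supersolution property: `−∂₃B·u₅ + ½⟨Hess B · u, u⟩ +
p^p (x₂/(x₃+(p−1)x₄))^p u₅ ≤ 0`.  Here `∂₃B` is the derivative of `B` in the direction
`(0,0,1,0)` and the quadratic form `Σ uᵢuⱼ ∂ᵢⱼB` is the second directional derivative of
`B` along `u`. -/
theorem bellman_HJB_supersolution (p : ℝ) (hp : 1 < p)
    (x : ℝ × ℝ × ℝ × ℝ) (hx : x ∈ interior (bellmanDomain p))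
    (u : ℝ × ℝ × ℝ × ℝ) (u5 : ℝ) (hu5 : 0 ≤ u5) :
    -(fderiv ℝ (bellmanB p) x ((0 : ℝ), (0 : ℝ), (1 : ℝ), (0 : ℝ))) * u5 +
      (1 / 2) * (fderiv ℝ (fun y => fderiv ℝ (bellmanB p) y u) x u) +
      p ^ p * (x.2.1 / (x.2.2.1 + (p - 1) * x.2.2.2)) ^ p * u5 ≤ 0 :=
  bellman_HJB_supersolution_general p hp x hx u u5
end
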